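/- Assume additionally that for every 0 < ε < λ_min − 1 there exists C > 0 such that C⁻¹‖x‖^{ln q/(n·ln(λ_max+ε))} ≤ w(x) ≤ C‖x‖^{ln q/(n·ln(λ_min−ε))} whenever ‖x‖ > 1 and C⁻¹‖x‖^{ln q/(n·ln(λ_min−ε))} ≤ w(x) ≤ C‖x‖^{ln q/(n·ln(λ_max+ε))} whenever ‖x‖ ≤ 1, where λ_max and λ_min denote the maximal and minimal moduli of the eigenvalues of A (these bounds hold for the He–Lau pseudo norm). Then for every subset E ⊆ ℝⁿ, (ln q/(n·ln λ_max))·dim_H^w E ≤ dim_H E ≤ (ln q/(n·ln λ_min))·dim_H^w E, where dim_H E denotes the classical Hausdorff dimension of E with respect to the Euclidean metric. -/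

import Mathlib

open MeasureTheory Set ENNReal NNReal

noncomputable section

/-- Points of `ℝⁿ` with the Euclidean norm. -/
abbrev Pt (n : ℕ) := EuclideanSpace ℝ (Fin n)

/-- The action of an `n × n` real matrix on Euclidean space. -/
def mapp {n : ℕ} (A : Matrix (Fin n) (Fin n) ℝ) (x : Pt n) : Pt n :=
  Matrix.toEuclideanLin A x

/-- A real matrix is expanding if all of its (complex) eigenvalues have modulus `> 1`. -/
def IsExpandingMatrix {n : ℕ} (A : Matrix (Fin n) (Fin n) ℝ) : Prop :=
  ∀ μ ∈ spectrum ℂ (A.map (fun a => (a : ℂ))), 1 < ‖μ‖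

/-- The diameter of a set with respect to the pseudo norm `w`. -/
def pdiam {n : ℕ} (w : Pt n → ℝ) (E : Set (Pt n)) : ℝ≥0∞ :=
  ⨆ (x ∈ E) (y ∈ E), ENNReal.ofReal (w (x - y))

/-- The `δ`-approximation of the `s`-dimensional pseudo Hausdorff measure. -/
def preHw {n : ℕ} (w : Pt n → ℝ) (s δ : ℝ) (E : Set (Pt n)) : ℝ≥0∞ :=
  ⨅ (U : ℕ → Set (Pt n)) (_ : E ⊆ ⋃ i, U i)
    (_ : ∀ i, pdiam w (U i) ≤ ENNReal.ofReal δ), ∑' i, pdiam w (U i) ^ s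

/-- The `s`-dimensional pseudo Hausdorff measure w.r.t. the pseudo norm `w`. -/
def Hw {n : ℕ} (w : Pt n → ℝ) (s : ℝ) (E : Set (Pt n)) : ℝ≥0∞ :=
  ⨆ (δ : ℝ) (_ : 0 < δ), preHw w s δ E

/-- Carathéodory measurability with respect to the outer measure `Hw w s`. -/
def HwMeasurable {n : ℕ} (w : Pt n → ℝ) (s : ℝ) (E : Set (Pt n)) : Prop :=
  ∀ T : Set (Pt n), Hw w s T = Hw w s (T ∩ E) + Hw w s (T \ E)

/-- A pseudo norm associated with the expanding matrix `A`. -/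
structure IsPseudoNorm {n : ℕ} (A : Matrix (Fin n) (Fin n) ℝ) (w : Pt n → ℝ) : Prop where
  continuous : Continuous w
  nonneg : ∀ x, 0 ≤ w x
  neg : ∀ x, w (-x) = w x
  eq_zero_iff : ∀ x, w x = 0 ↔ x = 0
  scaling : ∀ x, w (mapp A x) = |A.det| ^ ((1 : ℝ) / n) * w x
  quasi_triangle : ∃ β > (0 : ℝ), ∀ x y, w (x + y) ≤ β * max (w x) (w y)
  comparable : ∃ C > (0 : ℝ), ∃ α₁ > (0 : ℝ), ∃ α₂ > (0 : ℝ),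
    (∀ x : Pt n, 1 < ‖x‖ → C⁻¹ * ‖x‖ ^ α₁ ≤ w x ∧ w x ≤ C * ‖x‖ ^ α₂) ∧
    (∀ x : Pt n, ‖x‖ ≤ 1 → C⁻¹ * ‖x‖ ^ α₂ ≤ w x ∧ w x ≤ C * ‖x‖ ^ α₁)

/-- The map `f_d(x) = A⁻¹(x + d)` of the self-affine IFS. -/
def fIFS {n : ℕ} (A : Matrix (Fin n) (Fin n) ℝ) (d : Pt n) (x : Pt n) : Pt n :=
  mapp A⁻¹ (x + d)

/-- The open set condition for the IFS `{f_d}_{d ∈ D}`. -/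
def OSC {n : ℕ} (A : Matrix (Fin n) (Fin n) ℝ) (D : Finset (Pt n)) : Prop :=
  ∃ V : Set (Pt n), V.Nonempty ∧ IsOpen V ∧ Bornology.IsBounded V ∧
    (⋃ d ∈ D, fIFS A d '' V) ⊆ V ∧
    ∀ d ∈ D, ∀ d' ∈ D, d ≠ d' → fIFS A d '' V ∩ fIFS A d' '' V = ∅

/-- `K` is the self-affine set (attractor) for the pair `(A, D)`:
a nonempty compact set with `A K = ⋃_{d ∈ D} (K + d)`. -/
def IsSelfAffineSet {n : ℕ} (A : Matrix (Fin n) (Fin n) ℝ) (D : Finset (Pt n))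
    (K : Set (Pt n)) : Prop :=
  K.Nonempty ∧ IsCompact K ∧ mapp A '' K = ⋃ d ∈ D, (fun x => x + d) '' K

/-- The set `𝒟_M` of `M`-fold expansions `Σ_{j<M} A^j d_j`. -/
def DsetM {n : ℕ} (A : Matrix (Fin n) (Fin n) ℝ) (D : Finset (Pt n)) (M : ℕ) :
    Set (Pt n) :=
  {x | ∃ d : Fin M → Pt n, (∀ j, d j ∈ D) ∧ x = ∑ j : Fin M, mapp (A ^ (j : ℕ)) (d j)}

/-- The set `𝒟_∞ = ⋃_{M ≥ 1} 𝒟_M`. -/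
def DsetInf {n : ℕ} (A : Matrix (Fin n) (Fin n) ℝ) (D : Finset (Pt n)) : Set (Pt n) :=
  ⋃ (M : ℕ) (_ : 1 ≤ M), DsetM A D M

/-- A set is uniformly discrete if distinct points are uniformly separated. -/
def UniformlyDiscrete {n : ℕ} (S : Set (Pt n)) : Prop :=
  ∃ δ > (0 : ℝ), ∀ x ∈ S, ∀ y ∈ S, x ≠ y → δ < ‖x - y‖

/-- `σ` is the invariant (self-affine) probability measure of the IFS `{f_d}_{d ∈ D}`. -/
def IsInvariantMeasure {n : ℕ} (A : Matrix (Fin n) (Fin n) ℝ) (D : Finset (Pt n))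
    (σ : Measure (Pt n)) : Prop :=
  IsProbabilityMeasure σ ∧
  ∀ f : Pt n → ℝ, Continuous f → HasCompactSupport f →
    ∫ x, f x ∂σ = ((D.card : ℝ))⁻¹ * ∑ d ∈ D, ∫ x, f (fIFS A d x) ∂σ

/-- The measure `μ_M = Σ_{d_0,…,d_{M−1} ∈ 𝒟} δ_{d_0 + A d_1 + ⋯ + A^{M−1} d_{M−1}}`. -/
def muM {n : ℕ} (A : Matrix (Fin n) (Fin n) ℝ) (D : Finset (Pt n)) (M : ℕ) :
    Measure (Pt n) :=
  ∑ d ∈ (Finset.univ : Finset (Fin M → {x : Pt n // x ∈ D})),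
    Measure.dirac (∑ j : Fin M, mapp (A ^ (j : ℕ)) ((d j : Pt n)))

/-- Convolution of two Borel measures on `ℝⁿ`. -/
def mconv {n : ℕ} (μ ν : Measure (Pt n)) : Measure (Pt n) :=
  Measure.map (fun p : Pt n × Pt n => p.1 + p.2) (μ.prod ν)

/-- The upper `s`-density `ℰ⁺_{w,s}(ν)` of a Borel measure `ν` w.r.t. the pseudo norm `w`. -/
def upperDensity {n : ℕ} (w : Pt n → ℝ) (s : ℝ) (ν : Measure (Pt n)) : ℝ≥0∞ :=
  ⨅ (r : ℝ) (_ : 0 < r),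
    ⨆ (U : Set (Pt n)) (_ : IsCompact U) (_ : Convex ℝ U)
      (_ : ENNReal.ofReal r ≤ pdiam w U), ν U / pdiam w U ^ s

/-- The upper convex `s`-density `D^s_{w,c}(E, x)` of `E` at `x` w.r.t. `w`. -/
def upperConvexDensity {n : ℕ} (w : Pt n → ℝ) (s : ℝ) (E : Set (Pt n)) (x : Pt n) :
    ℝ≥0∞ :=
  ⨅ (r : ℝ) (_ : 0 < r),
    ⨆ (U : Set (Pt n)) (_ : Convex ℝ U) (_ : x ∈ U) (_ : 0 < pdiam w U)
      (_ : pdiam w U ≤ ENNReal.ofReal r), Hw w s (E ∩ U) / pdiam w U ^ s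

/-- The pseudo Hausdorff dimension `dim_H^w E = inf {s ≥ 0 : ℋ^s_w(E) = 0}`. -/
def dimHw {n : ℕ} (w : Pt n → ℝ) (E : Set (Pt n)) : ℝ≥0∞ :=
  ⨅ (t : ℝ≥0) (_ : Hw w (t : ℝ) E = 0), (t : ℝ≥0∞)

/-- `𝒱` is a Vitali class for `E` w.r.t. `w`. -/
def VitaliClass {n : ℕ} (w : Pt n → ℝ) (𝒱 : Set (Set (Pt n))) (E : Set (Pt n)) : Prop :=
  ∀ x ∈ E, ∀ δ : ℝ, 0 < δ →
    ∃ U ∈ 𝒱, x ∈ U ∧ 0 < pdiam w U ∧ pdiam w U ≤ ENNReal.ofReal δ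

/-- The composite map `f_𝐢 = f_{i₁} ∘ ⋯ ∘ f_{i_m}` associated with a word of digits. -/
def fWord {n : ℕ} (A : Matrix (Fin n) (Fin n) ℝ) (i : List (Pt n)) (x : Pt n) : Pt n :=
  i.foldr (fun d y => fIFS A d y) x

/-! For `0 < ε < λ_min - 1` put `a = ln q / (n ln (λ_max + ε))` and
`b = ln q / (n ln (λ_min - ε))`. At small scales the comparability bounds read
`‖z‖ ^ b ≲ w z ≲ ‖z‖ ^ a`, so sets of small `w`-diameter have small Euclidean diameter and
conversely, with `diam U ^ b ≲ diam_w U ≲ diam U ^ a`. Comparing covers gives `ℋ^{bt} ≲ ℋ^t_w`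
and `ℋ^t_w ≲ ℋ^{at}`, hence `a · dim_H^w E ≤ dim_H E ≤ b · dim_H^w E`; let `ε → 0`.
That `ln q > 0`, so that `a, b > 0`, holds because a pseudo norm is unbounded, whereas the
bound `w x ≤ C ‖x‖ ^ b` for `‖x‖ > 1` would bound it if `b ≤ 0`. -/

open Filter Topology

section PseudoHausdorff

variable {n : ℕ} {w : Pt n → ℝ}

lemma le_pdiam {U : Set (Pt n)} {x y : Pt n} (hx : x ∈ U) (hy : y ∈ U) :
    ENNReal.ofReal (w (x - y)) ≤ pdiam w U :=
  le_iSup₂_of_le x hx (le_iSup₂_of_le y hy le_rfl)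

lemma pdiam_le {U : Set (Pt n)} {c : ℝ≥0∞}
    (h : ∀ x ∈ U, ∀ y ∈ U, ENNReal.ofReal (w (x - y)) ≤ c) : pdiam w U ≤ c :=
  iSup₂_le fun x hx => iSup₂_le fun y hy => h x hx y hy

lemma preHw_le_Hw (s : ℝ) {δ : ℝ} (hδ : 0 < δ) (E : Set (Pt n)) :
    preHw w s δ E ≤ Hw w s E :=
  le_iSup₂_of_le δ hδ le_rfl

lemma ediam_rpow_le_mul_pdiam {b C δ : ℝ} (hb : 0 < b) (hC : 0 ≤ C) (hδ : 0 ≤ δ)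
    (h : ∀ z, w z ≤ δ → ‖z‖ ^ b ≤ C * w z) {U : Set (Pt n)}
    (hU : pdiam w U ≤ ENNReal.ofReal δ) :
    Metric.ediam U ^ b ≤ ENNReal.ofReal C * pdiam w U := by
  refine (ENNReal.le_rpow_inv_iff hb).1 (Metric.ediam_le fun x hx y hy => ?_)
  refine (ENNReal.le_rpow_inv_iff hb).2 ?_
  have hxy := le_pdiam (w := w) hx hy
  have hwδ : w (x - y) ≤ δ := (ENNReal.ofReal_le_ofReal_iff hδ).1 (hxy.trans hU)
  calc edist x y ^ b = ENNReal.ofReal (‖x - y‖ ^ b) := by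
        rw [edist_dist, dist_eq_norm, ENNReal.ofReal_rpow_of_nonneg (norm_nonneg _) hb.le]
    _ ≤ ENNReal.ofReal (C * w (x - y)) := ENNReal.ofReal_le_ofReal (h _ hwδ)
    _ ≤ ENNReal.ofReal C * pdiam w U := by
        rw [ENNReal.ofReal_mul hC]; gcongr

lemma pdiam_le_mul_ediam_rpow {a C ρ : ℝ} (ha : 0 < a) (hC : 0 ≤ C) (hρ : 0 ≤ ρ)
    (h : ∀ z : Pt n, ‖z‖ ≤ ρ → w z ≤ C * ‖z‖ ^ a) {U : Set (Pt n)}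
    (hU : Metric.ediam U ≤ ENNReal.ofReal ρ) :
    pdiam w U ≤ ENNReal.ofReal C * Metric.ediam U ^ a := by
  refine pdiam_le fun x hx y hy => ?_
  have hxy : ENNReal.ofReal ‖x - y‖ ≤ Metric.ediam U := by
    rw [← dist_eq_norm, ← edist_dist]; exact Metric.edist_le_ediam_of_mem hx hy
  have hxyρ : ‖x - y‖ ≤ ρ := (ENNReal.ofReal_le_ofReal_iff hρ).1 (hxy.trans hU)
  calc ENNReal.ofReal (w (x - y)) ≤ ENNReal.ofReal (C * ‖x - y‖ ^ a) :=
        ENNReal.ofReal_le_ofReal (h _ hxyρ)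
    _ = ENNReal.ofReal C * ENNReal.ofReal ‖x - y‖ ^ a := by
        rw [ENNReal.ofReal_mul hC, ENNReal.ofReal_rpow_of_nonneg (norm_nonneg _) ha.le]
    _ ≤ ENNReal.ofReal C * Metric.ediam U ^ a := by gcongr

lemma hausdorffMeasure_le_mul_Hw {b C δ t : ℝ} (hb : 0 < b) (hC : 0 < C) (hδ : 0 < δ)
    (ht : 0 ≤ t) (h : ∀ z, w z ≤ δ → ‖z‖ ^ b ≤ C * w z) (E : Set (Pt n)) :
    μH[b * t] E ≤ ENNReal.ofReal C ^ t * Hw w t E := by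
  have hC₀ : ENNReal.ofReal C ≠ 0 := (ENNReal.ofReal_pos.2 hC).ne'
  have hCt₀ : ENNReal.ofReal C ^ t ≠ 0 :=
    (ENNReal.rpow_pos_of_nonneg (pos_iff_ne_zero.2 hC₀) ht).ne'
  have hCt_top : ENNReal.ofReal C ^ t ≠ ⊤ :=
    ENNReal.rpow_ne_top_of_nonneg ht ENNReal.ofReal_ne_top
  rw [Measure.hausdorffMeasure_apply]
  refine iSup₂_le fun r hr => ?_
  obtain ⟨δ', -, hδ'₀, hδ'r⟩ := ENNReal.lt_iff_exists_real_btwn.1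
    (ENNReal.div_pos (ENNReal.rpow_pos_of_nonneg hr hb.le).ne' ENNReal.ofReal_ne_top :
      0 < r ^ b / ENNReal.ofReal C)
  have hη : 0 < min δ δ' := lt_min hδ (ENNReal.ofReal_pos.1 hδ'₀)
  refine le_trans ?_ (mul_le_mul_right (preHw_le_Hw t hη E) _)
  simp only [preHw, ENNReal.mul_iInf_of_ne hCt₀ hCt_top]
  refine le_iInf fun U => le_iInf fun hcov => le_iInf fun hU => ?_
  have hdiam : ∀ i, Metric.ediam (U i) ^ b ≤ ENNReal.ofReal C * pdiam w (U i) := fun i =>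
    ediam_rpow_le_mul_pdiam hb hC.le hδ.le h
      ((hU i).trans (ENNReal.ofReal_le_ofReal (min_le_left _ _)))
  have hr : ∀ i, Metric.ediam (U i) ≤ r := fun i => by
    refine (ENNReal.rpow_le_rpow_iff hb).1 ((hdiam i).trans ?_)
    calc ENNReal.ofReal C * pdiam w (U i)
        ≤ ENNReal.ofReal C * (r ^ b / ENNReal.ofReal C) := by
          gcongr
          exact (hU i).trans ((ENNReal.ofReal_le_ofReal (min_le_right _ _)).trans hδ'r.le)
      _ = r ^ b := ENNReal.mul_div_cancel hC₀ ENNReal.ofReal_ne_top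
  refine (iInf_le _ U).trans ((iInf_le _ hcov).trans ((iInf_le _ hr).trans ?_))
  rw [← ENNReal.tsum_mul_left]
  refine ENNReal.tsum_le_tsum fun i => iSup_le fun _ => ?_
  calc Metric.ediam (U i) ^ (b * t)
      = (Metric.ediam (U i) ^ b) ^ t := ENNReal.rpow_mul _ _ _
    _ ≤ (ENNReal.ofReal C * pdiam w (U i)) ^ t := ENNReal.rpow_le_rpow (hdiam i) ht
    _ = ENNReal.ofReal C ^ t * pdiam w (U i) ^ t := ENNReal.mul_rpow_of_nonneg _ _ ht

lemma Hw_le_mul_hausdorffMeasure {a C ρ c : ℝ} (ha : 0 < a) (hC : 0 < C) (hρ : 0 < ρ)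
    (hc : 0 < c) (h : ∀ z : Pt n, ‖z‖ ≤ ρ → w z ≤ C * ‖z‖ ^ a) (E : Set (Pt n)) :
    Hw w c E ≤ ENNReal.ofReal C ^ c * μH[a * c] E := by
  have hC₀ : ENNReal.ofReal C ≠ 0 := (ENNReal.ofReal_pos.2 hC).ne'
  have hCc₀ : ENNReal.ofReal C ^ c ≠ 0 :=
    (ENNReal.rpow_pos_of_nonneg (pos_iff_ne_zero.2 hC₀) hc.le).ne'
  have hCc_top : ENNReal.ofReal C ^ c ≠ ⊤ :=
    ENNReal.rpow_ne_top_of_nonneg hc.le ENNReal.ofReal_ne_top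
  refine iSup₂_le fun δ hδ => ?_
  have hδC : 0 < (ENNReal.ofReal δ / ENNReal.ofReal C) ^ a⁻¹ :=
    ENNReal.rpow_pos_of_nonneg (ENNReal.div_pos (ENNReal.ofReal_pos.2 hδ).ne'
      ENNReal.ofReal_ne_top) (inv_nonneg.2 ha.le)
  obtain ⟨ρ', -, hρ'₀, hρ'δ⟩ := ENNReal.lt_iff_exists_real_btwn.1 hδC
  have hr : 0 < min ρ ρ' := lt_min hρ (ENNReal.ofReal_pos.1 hρ'₀)
  rw [Measure.hausdorffMeasure_apply]
  refine le_trans ?_ (mul_le_mul_right (le_iSup₂_of_le _ (ENNReal.ofReal_pos.2 hr) le_rfl) _)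
  simp only [ENNReal.mul_iInf_of_ne hCc₀ hCc_top]
  refine le_iInf fun U => le_iInf fun hcov => le_iInf fun hU => ?_
  have hpdiam : ∀ i, pdiam w (U i) ≤ ENNReal.ofReal C * Metric.ediam (U i) ^ a := fun i =>
    pdiam_le_mul_ediam_rpow ha hC.le hρ.le h
      ((hU i).trans (ENNReal.ofReal_le_ofReal (min_le_left _ _)))
  have hδU : ∀ i, pdiam w (U i) ≤ ENNReal.ofReal δ := fun i => by
    refine (hpdiam i).trans ?_
    calc ENNReal.ofReal C * Metric.ediam (U i) ^ a
        ≤ ENNReal.ofReal C * (ENNReal.ofReal δ / ENNReal.ofReal C) := by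
          gcongr
          refine (ENNReal.le_rpow_inv_iff ha).1 ((hU i).trans ?_)
          exact (ENNReal.ofReal_le_ofReal (min_le_right _ _)).trans hρ'δ.le
      _ = ENNReal.ofReal δ := ENNReal.mul_div_cancel hC₀ ENNReal.ofReal_ne_top
  refine (iInf_le _ U).trans ((iInf_le _ hcov).trans ((iInf_le _ hδU).trans ?_))
  rw [← ENNReal.tsum_mul_left]
  refine ENNReal.tsum_le_tsum fun i => ?_
  rcases (U i).eq_empty_or_nonempty with hempty | hne
  · have : pdiam w (U i) = 0 := by simp [pdiam, hempty]
    simp [this, ENNReal.zero_rpow_of_pos hc]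
  · rw [iSup_pos hne]
    calc pdiam w (U i) ^ c ≤ (ENNReal.ofReal C * Metric.ediam (U i) ^ a) ^ c :=
          ENNReal.rpow_le_rpow (hpdiam i) hc.le
      _ = ENNReal.ofReal C ^ c * Metric.ediam (U i) ^ (a * c) := by
          rw [ENNReal.mul_rpow_of_nonneg _ _ hc.le, ENNReal.rpow_mul]

lemma dimH_le_mul_dimHw {b C δ : ℝ} (hb : 0 < b) (hC : 0 < C) (hδ : 0 < δ)
    (h : ∀ z, w z ≤ δ → ‖z‖ ^ b ≤ C * w z) (E : Set (Pt n)) :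
    dimH E ≤ ENNReal.ofReal b * dimHw w E := by
  have hb₀ : ENNReal.ofReal b ≠ 0 := (ENNReal.ofReal_pos.2 hb).ne'
  simp only [dimHw, ENNReal.mul_iInf_of_ne hb₀ ENNReal.ofReal_ne_top]
  refine le_iInf₂ fun t ht => ?_
  have hμ : μH[b * t] E = 0 := by
    simpa [ht] using hausdorffMeasure_le_mul_Hw hb hC hδ t.coe_nonneg h E
  have hbt : ENNReal.ofReal (b * t) = ENNReal.ofReal b * t := by
    rw [ENNReal.ofReal_mul hb.le, ENNReal.ofReal_coe_nnreal]
  rw [← hbt]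
  refine dimH_le_of_hausdorffMeasure_ne_top ?_
  rw [Real.coe_toNNReal _ (by positivity), hμ]
  exact ENNReal.zero_ne_top

lemma mul_dimHw_le_dimH {a C ρ : ℝ} (ha : 0 < a) (hC : 0 < C) (hρ : 0 < ρ)
    (h : ∀ z : Pt n, ‖z‖ ≤ ρ → w z ≤ C * ‖z‖ ^ a) (E : Set (Pt n)) :
    ENNReal.ofReal a * dimHw w E ≤ dimH E := by
  refine ENNReal.mul_le_of_forall_lt fun a' ha' c hc => ?_
  refine (mul_le_mul_left ha'.le _).trans (not_lt.1 fun hlt => hc.not_ge ?_)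
  lift c to ℝ≥0 using hc.ne_top
  have hc₀ : 0 < (c : ℝ) := by
    rcases eq_or_ne c 0 with rfl | hc₀
    · simp at hlt
    · exact_mod_cast pos_iff_ne_zero.2 hc₀
  have hac : ENNReal.ofReal a * c = ENNReal.ofReal (a * c) := by
    rw [ENNReal.ofReal_mul ha.le, ENNReal.ofReal_coe_nnreal]
  have hμ : μH[a * c] E = 0 := by
    have h0 := hausdorffMeasure_of_dimH_lt (hac ▸ hlt)
    rwa [Real.coe_toNNReal _ (by positivity)] at h0
  have hHw : Hw w c E = 0 := by
    simpa [hμ] using Hw_le_mul_hausdorffMeasure ha hC hρ hc₀ h E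
  exact iInf₂_le c hHw

end PseudoHausdorff

section Comparable

variable {n : ℕ} {w : Pt n → ℝ}

lemma rpow_norm_le_mul_of_lt_inv {C a b : ℝ} (hC : 0 < C) (ha : 0 ≤ a)
    (hlarge : ∀ z : Pt n, 1 < ‖z‖ → C⁻¹ * ‖z‖ ^ a ≤ w z)
    (hsmall : ∀ z : Pt n, ‖z‖ ≤ 1 → C⁻¹ * ‖z‖ ^ b ≤ w z) {z : Pt n} (hz : w z < C⁻¹) :
    ‖z‖ ^ b ≤ C * w z := by
  have hz₁ : ‖z‖ ≤ 1 := by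
    by_contra! h
    have : C⁻¹ * 1 ≤ C⁻¹ * ‖z‖ ^ a := by gcongr; exact Real.one_le_rpow h.le ha
    linarith [hlarge z h]
  calc ‖z‖ ^ b = C * (C⁻¹ * ‖z‖ ^ b) := by field_simp
    _ ≤ C * w z := by gcongr; exact hsmall z hz₁

theorem dimH_bounds_of_comparable {C a b : ℝ} (hC : 0 < C) (ha : 0 < a) (hb : 0 < b)
    (hlarge : ∀ z : Pt n, 1 < ‖z‖ → C⁻¹ * ‖z‖ ^ a ≤ w z)
    (hsmall : ∀ z : Pt n, ‖z‖ ≤ 1 → C⁻¹ * ‖z‖ ^ b ≤ w z ∧ w z ≤ C * ‖z‖ ^ a)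
    (E : Set (Pt n)) :
    ENNReal.ofReal a * dimHw w E ≤ dimH E ∧ dimH E ≤ ENNReal.ofReal b * dimHw w E := by
  refine ⟨mul_dimHw_le_dimH ha hC one_pos (fun z hz => (hsmall z hz).2) E, ?_⟩
  refine dimH_le_mul_dimHw hb hC (half_pos (inv_pos.2 hC)) (fun z hz => ?_) E
  exact rpow_norm_le_mul_of_lt_inv hC ha.le hlarge (fun z hz => (hsmall z hz).1)
    (hz.trans_lt (half_lt_self (inv_pos.2 hC)))

end Comparable

namespace IsPseudoNorm

variable {n : ℕ} {A : Matrix (Fin n) (Fin n) ℝ} {w : Pt n → ℝ}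

lemma exists_lt_apply (hw : IsPseudoNorm A w) (hn : 0 < n) (M : ℝ) :
    ∃ x : Pt n, 1 < ‖x‖ ∧ M < w x := by
  obtain ⟨C, hC, α, hα, _, _, hlarge, -⟩ := hw.comparable
  have hgrowth := (_root_.tendsto_rpow_atTop hα).const_mul_atTop (inv_pos.2 hC)
  obtain ⟨R, hR₁, hRM⟩ :=
    ((eventually_gt_atTop (1 : ℝ)).and (hgrowth.eventually_gt_atTop M)).exists
  have : Nonempty (Fin n) := ⟨⟨0, hn⟩⟩
  obtain ⟨x, hx⟩ := exists_norm_eq (Pt n) (zero_le_one.trans hR₁.le)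
  exact ⟨x, hx ▸ hR₁, hRM.trans_le (hx ▸ (hlarge x (hx ▸ hR₁)).1)⟩

lemma pos_of_le_rpow (hw : IsPseudoNorm A w) (hn : 0 < n) {C b : ℝ} (hC : 0 < C)
    (h : ∀ x : Pt n, 1 < ‖x‖ → w x ≤ C * ‖x‖ ^ b) : 0 < b := by
  by_contra! hb
  obtain ⟨x, hx, hCx⟩ := hw.exists_lt_apply hn C
  have : C * ‖x‖ ^ b ≤ C * 1 := by gcongr; exact Real.rpow_le_one_of_one_le_of_nonpos hx.le hb
  linarith [h x hx]

end IsPseudoNorm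

lemma tendsto_ofReal_div_mul_log_mul {α : Type*} {F : Filter α} {g : α → ℝ} {l L c : ℝ}
    (hg : Tendsto g F (𝓝 l)) (hl : 1 < l) (hc : 0 < c) (hL : 0 < L) (X : ℝ≥0∞) :
    Tendsto (fun x => ENNReal.ofReal (L / (c * Real.log (g x))) * X) F
      (𝓝 (ENNReal.ofReal (L / (c * Real.log l)) * X)) := by
  have hlog : 0 < Real.log l := Real.log_pos hl
  refine ENNReal.Tendsto.mul_const (ENNReal.tendsto_ofReal ?_)
    (Or.inl (ENNReal.ofReal_pos.2 (by positivity)).ne')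
  exact tendsto_const_nhds.div (tendsto_const_nhds.mul (hg.log (by linarith))) (by positivity)

theorem stmt19_general {n : ℕ} (hn : 0 < n) (A : Matrix (Fin n) (Fin n) ℝ)
    (hA : IsExpandingMatrix A)
    (w : Pt n → ℝ) (hw : IsPseudoNorm A w)
    (lmax lmin : ℝ)
    (hmax : IsGreatest ((fun z : ℂ => ‖z‖) '' spectrum ℂ (A.map (fun a => (a : ℂ)))) lmax)
    (hmin : IsLeast ((fun z : ℂ => ‖z‖) '' spectrum ℂ (A.map (fun a => (a : ℂ)))) lmin)
    (hcomp : ∀ ε : ℝ, 0 < ε → ε < lmin - 1 → ∃ C > (0 : ℝ),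
      (∀ x : Pt n, 1 < ‖x‖ →
        C⁻¹ * ‖x‖ ^ (Real.log |A.det| / (n * Real.log (lmax + ε))) ≤ w x ∧
        w x ≤ C * ‖x‖ ^ (Real.log |A.det| / (n * Real.log (lmin - ε)))) ∧
      (∀ x : Pt n, ‖x‖ ≤ 1 →
        C⁻¹ * ‖x‖ ^ (Real.log |A.det| / (n * Real.log (lmin - ε))) ≤ w x ∧
        w x ≤ C * ‖x‖ ^ (Real.log |A.det| / (n * Real.log (lmax + ε)))))
    (E : Set (Pt n)) :
    ENNReal.ofReal (Real.log |A.det| / (n * Real.log lmax)) * dimHw w E ≤ dimH E ∧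
    dimH E ≤ ENNReal.ofReal (Real.log |A.det| / (n * Real.log lmin)) * dimHw w E := by
  have hlmin : 1 < lmin := by obtain ⟨μ, hμ, rfl⟩ := hmin.1; exact hA μ hμ
  have hlmax : 1 < lmax := hlmin.trans_le (hmax.2 hmin.1)
  have hn' : (0 : ℝ) < n := Nat.cast_pos.2 hn
  have hε : ∀ᶠ ε in 𝓝[>] (0 : ℝ), ε ∈ Ioo 0 (lmin - 1) := Ioo_mem_nhdsGT (by linarith)
  obtain ⟨ε₀, hε₀⟩ := hε.exists
  have hL : 0 < Real.log |A.det| := by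
    obtain ⟨C, hC, hlarge, -⟩ := hcomp ε₀ hε₀.1 hε₀.2
    have hlog : 0 < n * Real.log (lmin - ε₀) :=
      mul_pos hn' (Real.log_pos (by linarith [hε₀.2]))
    exact (div_pos_iff_of_pos_right hlog).1
      (hw.pos_of_le_rpow hn hC fun x hx => (hlarge x hx).2)
  have hbounds := hε.mono fun ε hεI => by
    obtain ⟨C, hC, hlarge, hsmall⟩ := hcomp ε hεI.1 hεI.2
    have hmax' : 0 < Real.log (lmax + ε) := Real.log_pos (by linarith [hεI.1])
    have hmin' : 0 < Real.log (lmin - ε) := Real.log_pos (by linarith [hεI.2])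
    exact dimH_bounds_of_comparable hC (by positivity) (by positivity)
      (fun x hx => (hlarge x hx).1) hsmall E
  have hlmaxε : Tendsto (fun ε => lmax + ε) (𝓝[>] 0) (𝓝 lmax) :=
    ((continuous_const.add continuous_id).tendsto' 0 lmax (add_zero _)).mono_left
      nhdsWithin_le_nhds
  have hlminε : Tendsto (fun ε => lmin - ε) (𝓝[>] 0) (𝓝 lmin) :=
    ((continuous_const.sub continuous_id).tendsto' 0 lmin (sub_zero _)).mono_left
      nhdsWithin_le_nhds
  exact ⟨le_of_tendsto (tendsto_ofReal_div_mul_log_mul hlmaxε hlmax hn' hL _)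
      (hbounds.mono fun _ h => h.1),
    ge_of_tendsto (tendsto_ofReal_div_mul_log_mul hlminε hlmin hn' hL _)
      (hbounds.mono fun _ h => h.2)⟩

/-- Theorem 2.5 (He–Lau): comparison between the pseudo Hausdorff dimension and the
classical Hausdorff dimension, via the extreme moduli of eigenvalues of `A`. -/
theorem stmt19 {n : ℕ} (hn : 0 < n) (A : Matrix (Fin n) (Fin n) ℝ)
    (hA : IsExpandingMatrix A)
    (hAnorm : ∀ x : Pt n, ‖x‖ ≤ ‖mapp A x‖)
    (hAeq : ∀ x : Pt n, ‖x‖ = ‖mapp A x‖ → x = 0)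
    (w : Pt n → ℝ) (hw : IsPseudoNorm A w)
    (lmax lmin : ℝ)
    (hmax : IsGreatest ((fun z : ℂ => ‖z‖) '' spectrum ℂ (A.map (fun a => (a : ℂ)))) lmax)
    (hmin : IsLeast ((fun z : ℂ => ‖z‖) '' spectrum ℂ (A.map (fun a => (a : ℂ)))) lmin)
    (hcomp : ∀ ε : ℝ, 0 < ε → ε < lmin - 1 → ∃ C > (0 : ℝ),
      (∀ x : Pt n, 1 < ‖x‖ →
        C⁻¹ * ‖x‖ ^ (Real.log |A.det| / (n * Real.log (lmax + ε))) ≤ w x ∧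
        w x ≤ C * ‖x‖ ^ (Real.log |A.det| / (n * Real.log (lmin - ε)))) ∧
      (∀ x : Pt n, ‖x‖ ≤ 1 →
        C⁻¹ * ‖x‖ ^ (Real.log |A.det| / (n * Real.log (lmin - ε))) ≤ w x ∧
        w x ≤ C * ‖x‖ ^ (Real.log |A.det| / (n * Real.log (lmax + ε)))))
    (E : Set (Pt n)) :
    ENNReal.ofReal (Real.log |A.det| / (n * Real.log lmax)) * dimHw w E ≤ dimH E ∧
    dimH E ≤ ENNReal.ofReal (Real.log |A.det| / (n * Real.log lmin)) * dimHw w E :=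
  stmt19_general hn A hA w hw lmax lmin hmax hmin hcomp E
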